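/- If the feasibility condition holds (spectral radius of F less than 1), the target-achieving backscattering vector is β* = (I_K − F)^{−1}u, where u_i = Γ_i ñ_i d_i^{3α}/|g_i|² and F_{ij} = Γ_i |g_j|² d_j^{−2α} d_i^{3α}/|g_i|² for j ≠ i (F_{ii} = 0); moreover β* has all nonnegative entries. -/

import Mathlib

/-!
`F` is `a bᵀ - diagonal (a * b)` with `a i = Γ i d i ^ (3α) / g2 i ≥ 0` and
`b j = g2 j d j ^ (-2α) ≥ 0`. Put `m j = a j * b j`. For `t` with every `m j + t ≠ 0`,
the vector `x j = a j / (m j + t)` is an eigenvector for `t` as soon as `t` solves the secular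
equation `∑ j, m j / (m j + t) = 1`. On `[1, ∞)` the left side falls from
`c = ∑ j, m j / (m j + 1)` to `0`, so `c ≥ 1` would produce a real eigenvalue `≥ 1`. Hence
`spectralRadius ℝ F < 1` gives `c < 1`, and `(1 - F) x = u` then has the explicit solution
`x i = (u i + s * a i) / (m i + 1)`, where
`s = b ⬝ᵥ x = (∑ j, b j * u j / (m j + 1)) / (1 - c) ≥ 0`.
That solution is nonnegative by inspection. The Neumann series is avoided because
`spectralRadius ℝ` only sees real eigenvalues, and bounding the complex ones would need
Perron–Frobenius.
-/

open Matrix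

theorem Matrix.mem_spectrum_of_mulVec_eq_smul {n K : Type*} [Fintype n] [DecidableEq n] [Field K]
    {A : Matrix n n K} {μ : K} {x : n → K} (hx : x ≠ 0) (h : A *ᵥ x = μ • x) :
    μ ∈ spectrum K A := by
  rw [← Matrix.spectrum_toLin']
  exact (Module.End.hasEigenvalue_of_hasEigenvector
    ⟨Module.End.mem_eigenspace_iff.mpr (by simpa using h), hx⟩).mem_spectrum

theorem exists_sum_div_add_eq_one {ι : Type*} [Fintype ι] {m : ι → ℝ} (hm : ∀ j, 0 ≤ m j)
    (h : 1 ≤ ∑ j, m j / (m j + 1)) : ∃ t, 1 ≤ t ∧ ∑ j, m j / (m j + t) = 1 := by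
  set g : ℝ → ℝ := fun t => ∑ j, m j / (m j + t)
  set B := 1 + ∑ j, m j
  have hsum : 0 ≤ ∑ j, m j := Finset.sum_nonneg fun j _ => hm j
  have hB : 1 ≤ B := by simp only [B]; linarith
  have hg : ContinuousOn g (Set.Icc 1 B) := by
    refine continuousOn_finsetSum _ fun j _ => continuousOn_const.div (by fun_prop) ?_
    intro t ht
    linarith [hm j, ht.1]
  have hgB : g B < 1 := calc
    g B ≤ ∑ j, m j / B := Finset.sum_le_sum fun j _ =>
      div_le_div_of_nonneg_left (hm j) (by linarith) (by linarith [hm j])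
    _ = (∑ j, m j) / B := (Finset.sum_div ..).symm
    _ < 1 := (div_lt_one (by linarith)).mpr (by linarith)
  obtain ⟨t, ht, hgt⟩ := intermediate_value_Icc' hB hg ⟨hgB.le, h⟩
  exact ⟨t, ht.1, hgt⟩

section OffDiagonalOuter

variable {ι : Type*} [Fintype ι] [DecidableEq ι] {a b : ι → ℝ}

theorem vecMulVec_sub_diagonal_mulVec_apply (a b x : ι → ℝ) (i : ι) :
    ((vecMulVec a b - diagonal (a * b)) *ᵥ x) i = a i * (b ⬝ᵥ x - b i * x i) := by
  simp only [sub_mulVec, vecMulVec_mulVec, mulVec_diagonal, Pi.sub_apply, Pi.smul_apply,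
    Pi.mul_apply, MulOpposite.smul_eq_mul_unop, MulOpposite.unop_op]
  ring

theorem mem_spectrum_vecMulVec_sub_diagonal {t : ℝ} (ht : ∀ j, a j * b j + t ≠ 0)
    (h : ∑ j, a j * b j / (a j * b j + t) = 1) :
    t ∈ spectrum ℝ (vecMulVec a b - diagonal (a * b)) := by
  set x : ι → ℝ := fun j => a j / (a j * b j + t)
  have hbx : b ⬝ᵥ x = 1 := by
    rw [← h]
    refine Finset.sum_congr rfl fun j _ => ?_
    simp only [x]
    ring
  refine Matrix.mem_spectrum_of_mulVec_eq_smul (x := x) (fun hx => by simp [hx] at hbx) ?_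
  ext i
  rw [vecMulVec_sub_diagonal_mulVec_apply, hbx]
  simp only [x, Pi.smul_apply, smul_eq_mul]
  field_simp [ht i]
  ring

theorem sum_div_add_one_lt_one_of_spectralRadius_lt_one (ha : ∀ i, 0 ≤ a i)
    (hb : ∀ i, 0 ≤ b i) (hρ : spectralRadius ℝ (vecMulVec a b - diagonal (a * b)) < 1) :
    ∑ j, a j * b j / (a j * b j + 1) < 1 := by
  have hm : ∀ j, 0 ≤ a j * b j := fun j => mul_nonneg (ha j) (hb j)
  by_contra! hc
  obtain ⟨t, ht, hsum⟩ := exists_sum_div_add_eq_one hm hc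
  have hmem := mem_spectrum_vecMulVec_sub_diagonal (fun j => by linarith [hm j]) hsum
  refine hmem (spectrum.mem_resolventSet_of_spectralRadius_lt (hρ.trans_le ?_))
  have : (1 : NNReal) ≤ ‖t‖₊ := by
    rw [← NNReal.coe_le_coe, coe_nnnorm, Real.norm_of_nonneg (by linarith)]
    exact ht
  exact_mod_cast this

theorem exists_nonneg_one_sub_vecMulVec_sub_diagonal_mulVec_eq (ha : ∀ i, 0 ≤ a i)
    (hb : ∀ i, 0 ≤ b i) (hc : ∑ j, a j * b j / (a j * b j + 1) < 1) {u : ι → ℝ}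
    (hu : ∀ i, 0 ≤ u i) :
    ∃ x, (∀ i, 0 ≤ x i) ∧ (1 - (vecMulVec a b - diagonal (a * b))) *ᵥ x = u := by
  have hm : ∀ j, 0 < a j * b j + 1 := fun j => by linarith [mul_nonneg (ha j) (hb j)]
  set c := ∑ j, a j * b j / (a j * b j + 1)
  set s := (∑ j, b j * u j / (a j * b j + 1)) / (1 - c)
  have hs : 0 ≤ s := div_nonneg
    (Finset.sum_nonneg fun j _ => div_nonneg (mul_nonneg (hb j) (hu j)) (hm j).le) (by linarith)
  set x : ι → ℝ := fun i => (u i + s * a i) / (a i * b i + 1)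
  have hbx : b ⬝ᵥ x = s := by
    have hsc : s * (1 - c) = ∑ j, b j * u j / (a j * b j + 1) :=
      div_mul_cancel₀ _ (by linarith)
    calc b ⬝ᵥ x = ∑ j, b j * u j / (a j * b j + 1) + s * c := by
          rw [Finset.mul_sum, ← Finset.sum_add_distrib]
          refine Finset.sum_congr rfl fun j _ => ?_
          simp only [x]
          ring
      _ = s := by linear_combination -hsc
  refine ⟨x, fun i => div_nonneg (add_nonneg (hu i) (mul_nonneg hs (ha i))) (hm i).le, ?_⟩
  ext i
  rw [sub_mulVec, one_mulVec, Pi.sub_apply, vecMulVec_sub_diagonal_mulVec_apply, hbx]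
  simp only [x]
  field_simp [(hm i).ne']
  ring

theorem isUnit_one_sub_vecMulVec_sub_diagonal_and_inv_mulVec_nonneg (ha : ∀ i, 0 ≤ a i)
    (hb : ∀ i, 0 ≤ b i) (hρ : spectralRadius ℝ (vecMulVec a b - diagonal (a * b)) < 1)
    {u : ι → ℝ} (hu : ∀ i, 0 ≤ u i) :
    IsUnit (1 - (vecMulVec a b - diagonal (a * b))) ∧
      ∀ i, 0 ≤ ((1 - (vecMulVec a b - diagonal (a * b)))⁻¹ *ᵥ u) i := by
  set F := vecMulVec a b - diagonal (a * b)
  have hunit : IsUnit (1 - F) := by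
    have := spectrum.mem_resolventSet_iff.mp
      (spectrum.mem_resolventSet_of_spectralRadius_lt (k := (1 : ℝ)) (by simpa using hρ))
    rwa [map_one] at this
  obtain ⟨x, hx, hsol⟩ := exists_nonneg_one_sub_vecMulVec_sub_diagonal_mulVec_eq ha hb
    (sum_div_add_one_lt_one_of_spectralRadius_lt_one ha hb hρ) hu
  refine ⟨hunit, ?_⟩
  rwa [← hsol, mulVec_mulVec, nonsing_inv_mul _ ((isUnit_iff_isUnit_det _).mp hunit), one_mulVec]

end OffDiagonalOuter

theorem HTB_closed_form_general (K : ℕ) (Γ ntil d g2 : Fin K → ℝ) (α : ℝ)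
    (hΓ : ∀ i, 0 ≤ Γ i) (hn : ∀ i, 0 < ntil i) (hd : ∀ i, 0 < d i)
    (hg : ∀ i, 0 < g2 i)
    (F : Matrix (Fin K) (Fin K) ℝ)
    (hF : ∀ i j, F i j = if i = j then 0
      else Γ i * g2 j * (d j) ^ (-(2 * α)) * (d i) ^ (3 * α) / g2 i)
    (u : Fin K → ℝ) (hu : ∀ i, u i = Γ i * ntil i * (d i) ^ (3 * α) / g2 i)
    (hρ : spectralRadius ℝ F < 1) :
    IsUnit (1 - F) ∧ ∀ i, 0 ≤ ((1 - F)⁻¹ *ᵥ u) i := by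
  set a : Fin K → ℝ := fun i => Γ i * d i ^ (3 * α) / g2 i
  set b : Fin K → ℝ := fun j => g2 j * d j ^ (-(2 * α))
  have hF' : F = vecMulVec a b - diagonal (a * b) := by
    ext i j
    rw [hF, Matrix.sub_apply, vecMulVec_apply, diagonal_apply]
    split_ifs with h
    · subst h; simp
    · simp only [a, b]; ring
  subst hF'
  refine isUnit_one_sub_vecMulVec_sub_diagonal_and_inv_mulVec_nonneg (fun i => ?_) (fun j => ?_)
    hρ fun i => ?_
  · have := hΓ i; have := hd i; have := hg i
    positivity
  · have := hd j; have := hg j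
    positivity
  · have := hΓ i; have := hn i; have := hd i; have := hg i
    rw [hu]
    positivity

/-- If the spectral radius of the nonnegative matrix `F` (with `F_ii = 0`,
`F_ij = Γ_i |g_j|² d_j^(-2α) d_i^(3α)/|g_i|²` for `j ≠ i`) is less than 1, then
`I - F` is invertible, the target-achieving backscattering vector is
`β* = (I - F)⁻¹ u` with `u_i = Γ_i ñ_i d_i^(3α)/|g_i|²`, and `β*` is entrywise
nonnegative. -/
theorem HTB_closed_form (K : ℕ) (hK : 0 < K) (Γ ntil d g2 : Fin K → ℝ) (α : ℝ)
    (hΓ : ∀ i, 0 ≤ Γ i) (hn : ∀ i, 0 < ntil i) (hd : ∀ i, 0 < d i)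
    (hg : ∀ i, 0 < g2 i) (hα : 0 < α)
    (F : Matrix (Fin K) (Fin K) ℝ)
    (hF : ∀ i j, F i j = if i = j then 0
      else Γ i * g2 j * (d j) ^ (-(2 * α)) * (d i) ^ (3 * α) / g2 i)
    (u : Fin K → ℝ) (hu : ∀ i, u i = Γ i * ntil i * (d i) ^ (3 * α) / g2 i)
    (hρ : spectralRadius ℝ F < 1) :
    IsUnit (1 - F) ∧ ∀ i, 0 ≤ ((1 - F)⁻¹ *ᵥ u) i :=
  HTB_closed_form_general K Γ ntil d g2 α hΓ hn hd hg F hF u hu hρ
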